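/- For integers a, b, c ≥ 2: ζ(c,b,a) = ζ(a,b,c) − ζ(a,b)ζ(c) + ζ(a,b+c) + ζ(a)(−ζ(b,c) + ζ(b)ζ(c) − ζ(b+c)) + ζ(a+b,c) − ζ(a+b)ζ(c) + ζ(a+b+c). -/

import Mathlib

noncomputable def zeta1 (k : ℕ) : ℝ := ∑' n : ℕ+, 1 / (n : ℝ) ^ k

noncomputable def zeta2 (a b : ℕ) : ℝ :=
  ∑' p : {p : ℕ × ℕ // p.2 < p.1 ∧ 0 < p.2},
    1 / ((p.val.1 : ℝ) ^ a * (p.val.2 : ℝ) ^ b)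

noncomputable def zeta3 (a b c : ℕ) : ℝ :=
  ∑' t : {t : ℕ × ℕ × ℕ // t.2.1 < t.1 ∧ t.2.2 < t.2.1 ∧ 0 < t.2.2},
    1 / ((t.val.1 : ℝ) ^ a * (t.val.2.1 : ℝ) ^ b * (t.val.2.2 : ℝ) ^ c)

/-!
In `ℝ≥0∞` nested sums of arbitrary nonnegative sequences can be multiplied and rearranged freely.
Multiplying a sum over `n > m` by a sum over `k` and sorting `k` relative to `m` and `n` gives the
stuffle relation `ζ(a,b) ζ(c) = ζ(a,b,c) + ζ(a,b+c) + ζ(a,c,b) + ζ(a+c,b) + ζ(c,a,b)`, and in the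
same way `ζ(a) ζ(b) = ζ(a,b) + ζ(b,a) + ζ(a+b)`. For exponents `≥ 2` all terms are finite, so both
relations hold in `ℝ`. The reversed value `ζ(c,b,a)` occurs in the expansion of `ζ(b,a) ζ(c)` and
`ζ(a,b,c)` in that of `ζ(b,c) ζ(a)`; their difference, corrected by the expansions of `ζ(a) ζ(b)`
and `ζ(a) ζ(b+c)`, is the identity.
-/

open Set ENNReal

protected theorem ENNReal.tsum_union_disjoint {α : Type*} {s t : Set α} (hd : Disjoint s t)
    (f : α → ℝ≥0∞) : ∑' x : ↑(s ∪ t), f x = ∑' x : s, f x + ∑' x : t, f x :=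
  ENNReal.summable.tsum_union_disjoint hd ENNReal.summable

section NestedSums

variable {ι : Type*} [LinearOrder ι]

noncomputable def nestedSum2 (f g : ι → ℝ≥0∞) : ℝ≥0∞ :=
  ∑' p : {p : ι × ι // p.2 < p.1}, f p.1.1 * g p.1.2

noncomputable def nestedSum3 (f g h : ι → ℝ≥0∞) : ℝ≥0∞ :=
  ∑' t : {t : ι × ι × ι // t.2.1 < t.1 ∧ t.2.2 < t.2.1}, f t.1.1 * g t.1.2.1 * h t.1.2.2

theorem tsum_eq_tsum_Iio_add_add_tsum_Ioi (h : ι → ℝ≥0∞) (n : ι) :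
    ∑' k, h k = ∑' k : Iio n, h k + h n + ∑' k : Ioi n, h k := by
  rw [← tsum_univ, ← Iic_union_Ioi, ENNReal.tsum_union_disjoint (Iic_disjoint_Ioi le_rfl),
    ← Iio_union_right, ENNReal.tsum_union_disjoint (by simp), tsum_singleton]

theorem tsum_Ioi_eq_tsum_Ioo_add_add_tsum_Ioi (h : ι → ℝ≥0∞) {m n : ι} (hmn : m < n) :
    ∑' k : Ioi m, h k = ∑' k : Ioo m n, h k + h n + ∑' k : Ioi n, h k := by
  rw [← Ioc_union_Ioi_eq_Ioi hmn.le, ENNReal.tsum_union_disjoint Ioc_disjoint_Ioi_same,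
    ← Ioo_union_right hmn, ENNReal.tsum_union_disjoint (by simp), tsum_singleton]

theorem tsum_tsum_Iio_eq_tsum_lt (F : ι × ι → ℝ≥0∞) :
    ∑' n, ∑' m : Iio n, F (n, m) = ∑' p : {p : ι × ι // p.2 < p.1}, F p := by
  rw [← ENNReal.tsum_sigma' (fun x : Σ n, Iio n => F (x.1, x.2))]
  exact Equiv.tsum_eq (⟨fun x => ⟨(x.1, x.2), x.2.2⟩, fun p => ⟨p.1.1, p.1.2, p.2⟩,
    fun _ => rfl, fun _ => rfl⟩ : (Σ n, Iio n) ≃ {p : ι × ι // p.2 < p.1}) fun p => F p.1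

theorem tsum_tsum_Ioi_eq_tsum_lt (F : ι × ι → ℝ≥0∞) :
    ∑' n, ∑' m : Ioi n, F (m, n) = ∑' p : {p : ι × ι // p.2 < p.1}, F p := by
  rw [← ENNReal.tsum_sigma' (fun x : Σ n, Ioi n => F (x.2, x.1))]
  exact Equiv.tsum_eq (⟨fun x => ⟨(x.2.1, x.1), x.2.2⟩, fun p => ⟨p.1.2, p.1.1, p.2⟩,
    fun _ => rfl, fun _ => rfl⟩ : (Σ n, Ioi n) ≃ {p : ι × ι // p.2 < p.1}) fun p => F p.1

theorem tsum_mul_tsum_eq_nestedSum2_add (f g : ι → ℝ≥0∞) :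
    (∑' n, f n) * ∑' m, g m = nestedSum2 f g + nestedSum2 g f + ∑' n, f n * g n := by
  calc (∑' n, f n) * ∑' m, g m
      = ∑' n, (∑' m : Iio n, f n * g m + f n * g n + ∑' m : Ioi n, g m * f n) := by
        rw [← ENNReal.tsum_mul_right]
        refine tsum_congr fun n => ?_
        simp_rw [← ENNReal.tsum_mul_left, tsum_eq_tsum_Iio_add_add_tsum_Ioi _ n, mul_comm _ (f n)]
    _ = nestedSum2 f g + nestedSum2 g f + ∑' n, f n * g n := by
        rw [ENNReal.tsum_add, ENNReal.tsum_add, tsum_tsum_Iio_eq_tsum_lt (fun p => f p.1 * g p.2),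
          tsum_tsum_Ioi_eq_tsum_lt (fun p => g p.1 * f p.2), add_right_comm]
        rfl

theorem tsum_tsum_Iio_eq_tsum_lt_lt (F : ι × ι × ι → ℝ≥0∞) :
    ∑' p : {p : ι × ι // p.2 < p.1}, ∑' k : Iio p.1.2, F (p.1.1, p.1.2, k) =
      ∑' t : {t : ι × ι × ι // t.2.1 < t.1 ∧ t.2.2 < t.2.1}, F t := by
  rw [← ENNReal.tsum_sigma' (fun x : Σ p : {p : ι × ι // p.2 < p.1}, Iio p.1.2 =>
    F (x.1.1.1, x.1.1.2, x.2))]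
  exact Equiv.tsum_eq (⟨fun x => ⟨(x.1.1.1, x.1.1.2, x.2), x.1.2, x.2.2⟩,
    fun t => ⟨⟨(t.1.1, t.1.2.1), t.2.1⟩, t.1.2.2, t.2.2⟩, fun _ => rfl, fun _ => rfl⟩ :
      (Σ p : {p : ι × ι // p.2 < p.1}, Iio p.1.2) ≃
        {t : ι × ι × ι // t.2.1 < t.1 ∧ t.2.2 < t.2.1}) fun t => F t.1

theorem tsum_tsum_Ioo_eq_tsum_lt_lt (F : ι × ι × ι → ℝ≥0∞) :
    ∑' p : {p : ι × ι // p.2 < p.1}, ∑' k : Ioo p.1.2 p.1.1, F (p.1.1, k, p.1.2) =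
      ∑' t : {t : ι × ι × ι // t.2.1 < t.1 ∧ t.2.2 < t.2.1}, F t := by
  rw [← ENNReal.tsum_sigma' (fun x : Σ p : {p : ι × ι // p.2 < p.1}, Ioo p.1.2 p.1.1 =>
    F (x.1.1.1, x.2, x.1.1.2))]
  exact Equiv.tsum_eq (⟨fun x => ⟨(x.1.1.1, x.2.1, x.1.1.2), x.2.2.2, x.2.2.1⟩,
    fun t => ⟨⟨(t.1.1, t.1.2.2), t.2.2.trans t.2.1⟩, t.1.2.1, t.2.2, t.2.1⟩,
    fun _ => rfl, fun _ => rfl⟩ :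
      (Σ p : {p : ι × ι // p.2 < p.1}, Ioo p.1.2 p.1.1) ≃
        {t : ι × ι × ι // t.2.1 < t.1 ∧ t.2.2 < t.2.1}) fun t => F t.1

theorem tsum_tsum_Ioi_eq_tsum_lt_lt (F : ι × ι × ι → ℝ≥0∞) :
    ∑' p : {p : ι × ι // p.2 < p.1}, ∑' k : Ioi p.1.1, F (k, p.1.1, p.1.2) =
      ∑' t : {t : ι × ι × ι // t.2.1 < t.1 ∧ t.2.2 < t.2.1}, F t := by
  rw [← ENNReal.tsum_sigma' (fun x : Σ p : {p : ι × ι // p.2 < p.1}, Ioi p.1.1 =>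
    F (x.2, x.1.1.1, x.1.1.2))]
  exact Equiv.tsum_eq (⟨fun x => ⟨(x.2.1, x.1.1.1, x.1.1.2), x.2.2, x.1.2⟩,
    fun t => ⟨⟨(t.1.2.1, t.1.2.2), t.2.2⟩, t.1.1, t.2.1⟩, fun _ => rfl, fun _ => rfl⟩ :
      (Σ p : {p : ι × ι // p.2 < p.1}, Ioi p.1.1) ≃
        {t : ι × ι × ι // t.2.1 < t.1 ∧ t.2.2 < t.2.1}) fun t => F t.1

theorem nestedSum2_mul_tsum_eq (f g h : ι → ℝ≥0∞) :
    nestedSum2 f g * ∑' k, h k = nestedSum3 f g h + nestedSum2 f (g * h) + nestedSum3 f h g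
      + nestedSum2 (f * h) g + nestedSum3 h f g := by
  calc nestedSum2 f g * ∑' k, h k
      = ∑' p : {p : ι × ι // p.2 < p.1}, (∑' k : Iio p.1.2, f p.1.1 * g p.1.2 * h k
          + f p.1.1 * g p.1.2 * h p.1.2 + ∑' k : Ioo p.1.2 p.1.1, f p.1.1 * g p.1.2 * h k
          + f p.1.1 * g p.1.2 * h p.1.1 + ∑' k : Ioi p.1.1, f p.1.1 * g p.1.2 * h k) := by
        rw [nestedSum2, ← ENNReal.tsum_mul_right]
        refine tsum_congr fun p => ?_
        rw [tsum_eq_tsum_Iio_add_add_tsum_Ioi h p.1.2, tsum_Ioi_eq_tsum_Ioo_add_add_tsum_Ioi h p.2]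
        simp only [mul_add, ENNReal.tsum_mul_left, add_assoc]
    _ = _ := by
        unfold nestedSum2 nestedSum3
        rw [ENNReal.tsum_add, ENNReal.tsum_add, ENNReal.tsum_add, ENNReal.tsum_add,
          ← tsum_tsum_Iio_eq_tsum_lt_lt (fun t => f t.1 * g t.2.1 * h t.2.2),
          ← tsum_tsum_Ioo_eq_tsum_lt_lt (fun t => f t.1 * h t.2.1 * g t.2.2),
          ← tsum_tsum_Ioi_eq_tsum_lt_lt (fun t => h t.1 * f t.2.1 * g t.2.2)]
        simp only [Pi.mul_apply, mul_comm, mul_left_comm]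

end NestedSums

noncomputable def zetaTerm (k : ℕ) (n : ℕ+) : ℝ≥0∞ := ENNReal.ofReal (1 / (n : ℝ) ^ k)

theorem zetaTerm_add (a b : ℕ) : zetaTerm (a + b) = zetaTerm a * zetaTerm b := by
  ext n
  rw [Pi.mul_apply, zetaTerm, zetaTerm, zetaTerm, ← ofReal_mul (by positivity),
    one_div_mul_one_div, pow_add]

theorem zetaTerm_ne_top (k : ℕ) (n : ℕ+) : zetaTerm k n ≠ ⊤ := ofReal_ne_top

theorem toReal_zetaTerm (k : ℕ) (n : ℕ+) : (zetaTerm k n).toReal = 1 / (n : ℝ) ^ k :=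
  toReal_ofReal (by positivity)

theorem tsum_zetaTerm_ne_top {k : ℕ} (hk : 2 ≤ k) : ∑' n, zetaTerm k n ≠ ⊤ := by
  have hs : Summable fun n : ℕ+ => 1 / (n : ℝ) ^ k :=
    (Real.summable_one_div_nat_pow.2 hk).comp_injective PNat.coe_injective
  unfold zetaTerm
  rw [← ofReal_tsum_of_nonneg (fun n => by positivity) hs]
  exact ofReal_ne_top

theorem zeta1_eq_toReal (k : ℕ) : zeta1 k = (∑' n, zetaTerm k n).toReal := by
  rw [ENNReal.tsum_toReal_eq fun _ => zetaTerm_ne_top _ _]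
  simp only [toReal_zetaTerm, zeta1]

theorem zeta2_eq_toReal (a b : ℕ) :
    zeta2 a b = (nestedSum2 (zetaTerm a) (zetaTerm b)).toReal := by
  rw [nestedSum2, ENNReal.tsum_toReal_eq fun _ =>
    mul_ne_top (zetaTerm_ne_top _ _) (zetaTerm_ne_top _ _)]
  simp only [toReal_mul, toReal_zetaTerm, one_div_mul_one_div]
  exact (Equiv.tsum_eq (⟨fun p => ⟨((p.1.1 : ℕ), (p.1.2 : ℕ)), p.2, p.1.2.pos⟩,
    fun p => ⟨(⟨p.1.1, p.2.2.trans p.2.1⟩, ⟨p.1.2, p.2.2⟩), p.2.1⟩, fun _ => rfl, fun _ => rfl⟩ :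
      {p : ℕ+ × ℕ+ // p.2 < p.1} ≃ {p : ℕ × ℕ // p.2 < p.1 ∧ 0 < p.2})
    fun p => 1 / ((p.1.1 : ℝ) ^ a * (p.1.2 : ℝ) ^ b)).symm

theorem zeta3_eq_toReal (a b c : ℕ) :
    zeta3 a b c = (nestedSum3 (zetaTerm a) (zetaTerm b) (zetaTerm c)).toReal := by
  rw [nestedSum3, ENNReal.tsum_toReal_eq fun _ =>
    mul_ne_top (mul_ne_top (zetaTerm_ne_top _ _) (zetaTerm_ne_top _ _)) (zetaTerm_ne_top _ _)]
  simp only [toReal_mul, toReal_zetaTerm, one_div_mul_one_div]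
  exact (Equiv.tsum_eq (⟨fun t => ⟨((t.1.1 : ℕ), (t.1.2.1 : ℕ), (t.1.2.2 : ℕ)), t.2.1, t.2.2,
      t.1.2.2.pos⟩,
    fun t => ⟨(⟨t.1.1, t.2.2.2.trans (t.2.2.1.trans t.2.1)⟩, ⟨t.1.2.1, t.2.2.2.trans t.2.2.1⟩,
      ⟨t.1.2.2, t.2.2.2⟩), t.2.1, t.2.2.1⟩, fun _ => rfl, fun _ => rfl⟩ :
      {t : ℕ+ × ℕ+ × ℕ+ // t.2.1 < t.1 ∧ t.2.2 < t.2.1} ≃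
        {t : ℕ × ℕ × ℕ // t.2.1 < t.1 ∧ t.2.2 < t.2.1 ∧ 0 < t.2.2})
    fun t => 1 / ((t.1.1 : ℝ) ^ a * (t.1.2.1 : ℝ) ^ b * (t.1.2.2 : ℝ) ^ c)).symm

theorem nestedSum2_zetaTerm_ne_top {a b : ℕ} (ha : 2 ≤ a) (hb : 2 ≤ b) :
    nestedSum2 (zetaTerm a) (zetaTerm b) ≠ ⊤ := by
  refine ne_top_of_le_ne_top (mul_ne_top (tsum_zetaTerm_ne_top ha) (tsum_zetaTerm_ne_top hb)) ?_
  rw [tsum_mul_tsum_eq_nestedSum2_add]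
  exact le_self_add.trans le_self_add

theorem zeta1_mul_zeta1 {a b : ℕ} (ha : 2 ≤ a) (hb : 2 ≤ b) :
    zeta1 a * zeta1 b = zeta2 a b + zeta2 b a + zeta1 (a + b) := by
  have h := tsum_mul_tsum_eq_nestedSum2_add (zetaTerm a) (zetaTerm b)
  simp only [← Pi.mul_apply (zetaTerm a), ← zetaTerm_add] at h
  have hfin := h ▸ mul_ne_top (tsum_zetaTerm_ne_top ha) (tsum_zetaTerm_ne_top hb)
  simp only [add_ne_top] at hfin
  rw [zeta1_eq_toReal, zeta1_eq_toReal, ← toReal_mul, h]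
  simp only [toReal_add, hfin, add_ne_top, ne_eq, not_false_eq_true, and_self, zeta2_eq_toReal,
    zeta1_eq_toReal]

theorem zeta2_mul_zeta1 {a b c : ℕ} (ha : 2 ≤ a) (hb : 2 ≤ b) (hc : 2 ≤ c) :
    zeta2 a b * zeta1 c = zeta3 a b c + zeta2 a (b + c) + zeta3 a c b + zeta2 (a + c) b
      + zeta3 c a b := by
  have h := nestedSum2_mul_tsum_eq (zetaTerm a) (zetaTerm b) (zetaTerm c)
  rw [← zetaTerm_add, ← zetaTerm_add] at h
  have hfin := h ▸ mul_ne_top (nestedSum2_zetaTerm_ne_top ha hb) (tsum_zetaTerm_ne_top hc)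
  simp only [add_ne_top] at hfin
  rw [zeta2_eq_toReal, zeta1_eq_toReal, ← toReal_mul, h]
  simp only [toReal_add, hfin, add_ne_top, ne_eq, not_false_eq_true, and_self, zeta2_eq_toReal,
    zeta3_eq_toReal]

theorem reversion_identity (a b c : ℕ) (ha : 2 ≤ a) (hb : 2 ≤ b) (hc : 2 ≤ c) :
    zeta3 c b a =
      zeta3 a b c - zeta2 a b * zeta1 c + zeta2 a (b + c)
        + zeta1 a * (-zeta2 b c + zeta1 b * zeta1 c - zeta1 (b + c))
        + zeta2 (a + b) c - zeta1 (a + b) * zeta1 c + zeta1 (a + b + c) := by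
  have h_a_b := zeta1_mul_zeta1 ha hb
  have h_ba_c := zeta2_mul_zeta1 hb ha hc
  have h_bc_a := zeta2_mul_zeta1 hb hc ha
  have h_a_bc := zeta1_mul_zeta1 ha (show 2 ≤ b + c by omega)
  rw [Nat.add_comm c a, Nat.add_comm b a] at h_bc_a
  rw [← Nat.add_assoc] at h_a_bc
  linear_combination -zeta1 c * h_a_b - h_ba_c + h_bc_a + h_a_bc
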